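/- For every p with 1 < p < ∞ and every integer n ≥ 4, there exists an n-point metric space M such that no 4-point subspace of M embeds isometrically into ℓ_p. (Consequently R_p(n) = 3 for n ≥ 3 and 1 < p < ∞.) -/

import Mathlib

/-!
The metric is the star metric `d(i, j) = ε^(i+1) + ε^(j+1)` (`i ≠ j`). Take four of its points
in increasing order and move the last one to the origin: the other three become vectors `u i` with
`‖u i‖ = r i + ρ` and `‖u i - u j‖ = r i + r j`, where `ρ ≤ ε r i`. Each pair `u i, u j` is then
almost opposite: the normalized vectors are at distance `≥ 2 - 2ε`.

For `p ≥ 2` this is impossible in `ℓ_p`, which is uniformly convex by Clarkson's inequality: if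
unit vectors `x, y, z` were pairwise almost opposite, `x + y`, `y + z`, `z + x` would all be small,
yet `(x + y) + (y + z) - (z + x) = 2y`. For `1 < p < 2` the same argument runs in the uniformly
convex dual `ℓ_q`, `q = p / (p - 1) > 2`: unit functionals norming `u 0 - u 1`, `u 1 - u 2` and
`u 2 - u 0` are pairwise almost opposite.
-/

open scoped ENNReal

/-- `d` is a metric (distance function) on `α`. -/
def IsMetricDist {α : Type*} (d : α → α → ℝ) : Prop :=
  (∀ x y, d x y = 0 ↔ x = y) ∧ (∀ x y, d x y = d y x) ∧
    (∀ x y z, d x z ≤ d x y + d y z)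

open scoped NNReal

theorem Real.rpow_add_le_mul_rpow_add_rpow {a b q : ℝ} (ha : 0 ≤ a) (hb : 0 ≤ b) (hq : 1 ≤ q) :
    (a + b) ^ q ≤ 2 ^ (q - 1) * (a ^ q + b ^ q) := by
  lift a to ℝ≥0 using ha
  lift b to ℝ≥0 using hb
  exact_mod_cast NNReal.rpow_add_le_mul_rpow_add_rpow a b hq

theorem Real.abs_add_rpow_add_abs_sub_rpow_le {r : ℝ} (hr : 2 ≤ r) (a b : ℝ) :
    |a + b| ^ r + |a - b| ^ r ≤ 2 ^ (r - 1) * (|a| ^ r + |b| ^ r) := by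
  have hs : 1 ≤ r / 2 := by linarith
  have sq_rpow (t : ℝ) : |t| ^ r = (t ^ 2) ^ (r / 2) := by
    rw [← sq_abs, ← Real.rpow_natCast, ← Real.rpow_mul (abs_nonneg t)]
    ring_nf
  have h2 : (2 : ℝ) ^ (r / 2) * 2 ^ (r / 2 - 1) = 2 ^ (r - 1) := by
    rw [← Real.rpow_add two_pos]; ring_nf
  simp only [sq_rpow]
  calc ((a + b) ^ 2) ^ (r / 2) + ((a - b) ^ 2) ^ (r / 2)
      ≤ ((a + b) ^ 2 + (a - b) ^ 2) ^ (r / 2) :=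
        Real.add_rpow_le_rpow_add (sq_nonneg _) (sq_nonneg _) hs
    _ = 2 ^ (r / 2) * (a ^ 2 + b ^ 2) ^ (r / 2) := by
        rw [← Real.mul_rpow zero_le_two (by positivity)]; ring_nf
    _ ≤ 2 ^ (r / 2) * (2 ^ (r / 2 - 1) * ((a ^ 2) ^ (r / 2) + (b ^ 2) ^ (r / 2))) := by
        gcongr
        exact Real.rpow_add_le_mul_rpow_add_rpow (sq_nonneg _) (sq_nonneg _) hs
    _ = 2 ^ (r - 1) * ((a ^ 2) ^ (r / 2) + (b ^ 2) ^ (r / 2)) := by rw [← h2, mul_assoc]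

theorem Real.abs_abs_rpow_sub_two_mul {p : ℝ} (hp : p ≠ 1) (t : ℝ) :
    |(|t| ^ (p - 2) * t)| = |t| ^ (p - 1) := by
  rcases eq_or_ne t 0 with rfl | ht
  · simp [Real.zero_rpow (sub_ne_zero.2 hp)]
  · rw [abs_mul, abs_of_nonneg (by positivity), ← Real.rpow_add_one (abs_ne_zero.2 ht)]
    ring_nf

theorem Real.abs_rpow_sub_two_mul_mul_self {p : ℝ} (hp : p ≠ 0) (t : ℝ) :
    |t| ^ (p - 2) * t * t = |t| ^ p := by
  rcases eq_or_ne t 0 with rfl | ht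
  · simp [Real.zero_rpow hp]
  · rw [mul_assoc, ← abs_mul_abs_self, ← mul_assoc, ← Real.rpow_add_one (abs_ne_zero.2 ht),
      ← Real.rpow_add_one (abs_ne_zero.2 ht)]
    ring_nf

namespace lp

variable {ι : Type*} {p : ℝ≥0∞}

theorem norm_add_rpow_add_norm_sub_rpow_le (hp : 2 ≤ p.toReal) (x y : lp (fun _ : ι => ℝ) p) :
    ‖x + y‖ ^ p.toReal + ‖x - y‖ ^ p.toReal ≤
      2 ^ (p.toReal - 1) * (‖x‖ ^ p.toReal + ‖y‖ ^ p.toReal) := by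
  have hp0 : 0 < p.toReal := by linarith
  have summable (z : lp (fun _ : ι => ℝ) p) : Summable fun i => ‖z i‖ ^ p.toReal :=
    (lp.memℓp z).summable hp0
  simp only [lp.norm_rpow_eq_tsum hp0]
  rw [← (summable _).tsum_add (summable _), ← (summable x).tsum_add (summable y), ← tsum_mul_left]
  refine Summable.tsum_le_tsum (fun i => ?_) ((summable _).add (summable _))
    (((summable x).add (summable y)).mul_left _)
  simpa only [lp.coeFn_add, lp.coeFn_sub, Pi.add_apply, Pi.sub_apply, Real.norm_eq_abs]
    using Real.abs_add_rpow_add_abs_sub_rpow_le hp (x i) (y i)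

theorem uniformConvexSpace [Fact (1 ≤ p)] (hp : 2 ≤ p.toReal) :
    UniformConvexSpace (lp (fun _ : ι => ℝ) p) := by
  set r := p.toReal
  have hr : 0 < r := by linarith
  refine ⟨fun ε hε => ?_⟩
  -- capping `ε` at the diameter `2` of the unit ball keeps the base of `· ^ r⁻¹` nonnegative
  set s := 2 ^ r - min ε 2 ^ r
  have hs0 : 0 ≤ s := sub_nonneg.2 <| by gcongr; exact min_le_right _ _
  have hs2 : s < 2 ^ r := sub_lt_self _ (by positivity)
  refine ⟨2 - s ^ r⁻¹, sub_pos.2 ((Real.rpow_inv_lt_iff_of_pos hs0 zero_le_two hr).2 hs2),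
    fun x hx y hy hxy => ?_⟩
  have clarkson := norm_add_rpow_add_norm_sub_rpow_le hp x y
  have hε : min ε 2 ^ r ≤ ‖x - y‖ ^ r := by gcongr; exact min_le_of_left_le hxy
  have h2 : (2 : ℝ) ^ (r - 1) * 2 = 2 ^ r := by
    rw [Real.rpow_sub_one two_ne_zero]; ring
  rw [sub_sub_cancel, Real.le_rpow_inv_iff_of_pos (norm_nonneg _) hs0 hr]
  rw [hx, hy, Real.one_rpow] at clarkson
  linarith

theorem exists_norm_eq_one_tsum_mul_eq_one {p q : ℝ} (hpq : p.HolderConjugate q)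
    (x : lp (fun _ : ι => ℝ) (ENNReal.ofReal p)) (hx : ‖x‖ = 1) :
    ∃ g : lp (fun _ : ι => ℝ) (ENNReal.ofReal q), ‖g‖ = 1 ∧ ∑' i, g i * x i = 1 := by
  have hp : (ENNReal.ofReal p).toReal = p := ENNReal.toReal_ofReal hpq.nonneg
  have hq : (ENNReal.ofReal q).toReal = q := ENNReal.toReal_ofReal hpq.symm.nonneg
  have pow_q (t : ℝ) : ‖|t| ^ (p - 2) * t‖ ^ q = ‖t‖ ^ p := by
    rw [Real.norm_eq_abs, Real.abs_abs_rpow_sub_two_mul hpq.lt.ne', ← Real.rpow_mul (abs_nonneg t),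
      hpq.sub_one_mul_conj, Real.norm_eq_abs]
  have hsum : HasSum (fun i => ‖x i‖ ^ p) 1 := by
    simpa [hp, hx] using lp.hasSum_norm (by rw [hp]; exact hpq.pos) x
  have hg : Memℓp (fun i => |x i| ^ (p - 2) * x i) (ENNReal.ofReal q) :=
    memℓp_gen (by simpa only [hq, pow_q] using hsum.summable)
  refine ⟨⟨_, hg⟩, ?_, ?_⟩
  · rw [lp.norm_eq_tsum_rpow (by rw [hq]; exact hpq.symm.pos), hq]
    show (∑' i, ‖|x i| ^ (p - 2) * x i‖ ^ q) ^ (1 / q) = 1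
    simp only [pow_q, hsum.tsum_eq, Real.one_rpow]
  · show ∑' i, |x i| ^ (p - 2) * x i * x i = 1
    simpa only [Real.abs_rpow_sub_two_mul_mul_self hpq.ne_zero, Real.norm_eq_abs] using hsum.tsum_eq

end lp

theorem exists_forall_sphere_norm_sub_le_two_sub (E : Type*) [SeminormedAddCommGroup E]
    [NormedSpace ℝ E] [UniformConvexSpace E] :
    ∃ δ, 0 < δ ∧ ∀ ⦃x y z : E⦄, ‖x‖ = 1 → ‖y‖ = 1 → ‖z‖ = 1 →
      2 - δ < ‖x - y‖ → 2 - δ < ‖y - z‖ → ‖z - x‖ ≤ 2 - δ := by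
  obtain ⟨δ, hδ, hconv⟩ :=
    exists_forall_sphere_dist_add_le_two_sub E (by norm_num : (0 : ℝ) < 2 / 3)
  refine ⟨δ, hδ, fun x y z hx hy hz hxy hyz => le_of_not_gt fun hzx => ?_⟩
  have small {a b : E} (ha : ‖a‖ = 1) (hb : ‖b‖ = 1) (hab : 2 - δ < ‖a - b‖) : ‖a + b‖ < 2 / 3 := by
    by_contra! h
    have := hconv ha (y := -b) (by rwa [norm_neg]) (by rwa [sub_neg_eq_add])
    rw [← sub_eq_add_neg] at this
    linarith
  have h2y : ‖(x + y) + (y + z) - (z + x)‖ = 2 := by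
    rw [show (x + y) + (y + z) - (z + x) = (2 : ℝ) • y by rw [two_smul]; abel, norm_smul, hy]
    norm_num
  linarith [norm_sub_le ((x + y) + (y + z)) (z + x), norm_add_le (x + y) (y + z),
    small hx hy hxy, small hy hz hyz, small hz hx hzx]

section Star

variable {E : Type*} [NormedAddCommGroup E]

/-- The points `x i` realize the star metric `d(i, j) = r i + r j` (`i ≠ j`) with lacunary
weights. -/
structure IsLacunaryStar (ε : ℝ) (x : Fin 4 → E) (r : Fin 4 → ℝ) : Prop where
  norm_sub : ∀ i j, i ≠ j → ‖x i - x j‖ = r i + r j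
  le₁₀ : r 1 ≤ r 0
  le₂₁ : r 2 ≤ r 1
  pos₃ : 0 < r 3
  le_mul₃₂ : r 3 ≤ ε * r 2

theorem IsLacunaryStar.pos_and_le_mul {ε : ℝ} {x : Fin 4 → E} {r : Fin 4 → ℝ}
    (h : IsLacunaryStar ε x r) (hε : 0 < ε) {i : Fin 4} (hi : i ≠ 3) :
    0 < r i ∧ r 3 ≤ ε * r i := by
  have h2i : r 2 ≤ r i := by
    fin_cases i
    exacts [h.le₂₁.trans h.le₁₀, h.le₂₁, le_rfl, absurd rfl hi]
  have h2 : 0 < r 2 := pos_of_mul_pos_right (h.pos₃.trans_le h.le_mul₃₂) hε.le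
  exact ⟨h2.trans_le h2i, h.le_mul₃₂.trans (by gcongr)⟩

variable [NormedSpace ℝ E]

theorem norm_smul_smul_inv_norm (x : E) : ‖x‖ • ‖x‖⁻¹ • x = x := by
  rcases eq_or_ne x 0 with rfl | hx
  · simp
  · exact smul_inv_smul₀ (norm_ne_zero_iff.2 hx) x

theorem norm_smul_inv_norm_le_one (x : E) : ‖‖x‖⁻¹ • x‖ ≤ 1 := by
  rcases eq_or_ne x 0 with rfl | hx
  · simp
  · exact (norm_smul_inv_norm hx).le

theorem norm_sub_le_of_norm_le_norm {x y : E} (h : ‖y‖ ≤ ‖x‖) :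
    ‖x - y‖ ≤ ‖x‖ - ‖y‖ + ‖y‖ * ‖‖x‖⁻¹ • x - ‖y‖⁻¹ • y‖ := by
  have decomp : x - y = (‖x‖ - ‖y‖) • (‖x‖⁻¹ • x) + ‖y‖ • (‖x‖⁻¹ • x - ‖y‖⁻¹ • y) := by
    rw [smul_sub, norm_smul_smul_inv_norm y, ← add_sub_assoc, ← add_smul, sub_add_cancel,
      norm_smul_smul_inv_norm x]
  calc ‖x - y‖
      ≤ ‖(‖x‖ - ‖y‖) • (‖x‖⁻¹ • x)‖ + ‖‖y‖ • (‖x‖⁻¹ • x - ‖y‖⁻¹ • y)‖ := decomp ▸ norm_add_le _ _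
    _ ≤ ‖x‖ - ‖y‖ + ‖y‖ * ‖‖x‖⁻¹ • x - ‖y‖⁻¹ • y‖ := by
      rw [norm_smul_of_nonneg (sub_nonneg.2 h), norm_smul_of_nonneg (norm_nonneg y)]
      gcongr
      exact mul_le_of_le_one_right (sub_nonneg.2 h) (norm_smul_inv_norm_le_one x)

theorem two_sub_two_mul_le_norm_smul_inv_norm_sub {x y : E} {a b ρ ε : ℝ}
    (hx : ‖x‖ = a + ρ) (hy : ‖y‖ = b + ρ) (hxy : ‖x - y‖ = a + b) (hba : b ≤ a) (hb : 0 < b)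
    (hρ : 0 ≤ ρ) (hρb : ρ ≤ ε * b) :
    2 - 2 * ε ≤ ‖‖x‖⁻¹ • x - ‖y‖⁻¹ • y‖ := by
  have key := norm_sub_le_of_norm_le_norm (x := x) (y := y) (by linarith)
  set d := ‖‖x‖⁻¹ • x - ‖y‖⁻¹ • y‖
  rw [hx, hy, hxy] at key
  have hε : 0 ≤ ε := nonneg_of_mul_nonneg_left (hρ.trans hρb) hb
  refine le_of_mul_le_mul_right ?_ (by linarith : 0 < b + ρ)
  nlinarith [mul_nonneg hε hρ]

section Functionals

variable {φ ψ : StrongDual ℝ E}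

theorem apply_le_norm_of_opNorm_le_one (hφ : ‖φ‖ ≤ 1) (z : E) : φ z ≤ ‖z‖ :=
  (Real.le_norm_self _).trans (φ.le_of_opNorm_le hφ z |>.trans_eq (one_mul _))

theorem sub_le_apply_sub_of_apply_sub_eq (hφ : ‖φ‖ ≤ 1) {x y o : E} {a b ρ : ℝ}
    (hxy : φ (x - y) = a + b) (hx : ‖x - o‖ = a + ρ) (hy : ‖y - o‖ = b + ρ) :
    a - ρ ≤ φ (x - o) ∧ b - ρ ≤ φ (o - y) := by
  have split : φ (x - o) + φ (o - y) = a + b := by rw [← map_add, sub_add_sub_cancel, hxy]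
  have hx' := apply_le_norm_of_opNorm_le_one hφ (x - o)
  have hy' := apply_le_norm_of_opNorm_le_one hφ (o - y)
  rw [hx] at hx'
  rw [norm_sub_rev, hy] at hy'
  constructor <;> linarith

theorem two_sub_four_mul_le_norm_sub {x o : E} {a ρ ε : ℝ} (hx : ‖x - o‖ = a + ρ)
    (hφ : a - ρ ≤ φ (x - o)) (hψ : a - ρ ≤ ψ (o - x)) (ha : 0 < a) (hρ : 0 ≤ ρ)
    (hρa : ρ ≤ ε * a) :
    2 - 4 * ε ≤ ‖φ - ψ‖ := by
  have hε : 0 ≤ ε := nonneg_of_mul_nonneg_left (hρ.trans hρa) ha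
  have sum : (φ - ψ) (x - o) = φ (x - o) + ψ (o - x) := by
    rw [sub_apply, ← neg_sub x o, map_neg, sub_eq_add_neg]
  have bound := (φ - ψ).le_opNorm (x - o)
  rw [hx] at bound
  refine le_of_mul_le_mul_right ?_ (by linarith : 0 < a + ρ)
  nlinarith [Real.le_norm_self ((φ - ψ) (x - o)), mul_nonneg hε hρ]

end Functionals

theorem exists_forall_not_isLacunaryStar_of_uniformConvexSpace [UniformConvexSpace E] :
    ∃ ε, 0 < ε ∧ ε < 1 ∧ ∀ (x : Fin 4 → E) (r : Fin 4 → ℝ), ¬ IsLacunaryStar ε x r := by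
  obtain ⟨δ, hδ, hfar⟩ := exists_forall_sphere_norm_sub_le_two_sub E
  set ε := min (δ / 4) (1 / 2)
  have hε : 0 < ε := by positivity
  refine ⟨ε, hε, (min_le_right _ _).trans_lt (by norm_num), fun x r h => ?_⟩
  set u : Fin 4 → E := fun i => ‖x i - x 3‖⁻¹ • (x i - x 3)
  have unit (i : Fin 4) (hi : i ≠ 3) : ‖u i‖ = 1 := by
    refine norm_smul_inv_norm (norm_pos_iff.1 ?_)
    rw [h.norm_sub i 3 hi]
    linarith [(h.pos_and_le_mul hε hi).1, h.pos₃]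
  have far (i j : Fin 4) (hi : i ≠ 3) (hj : j ≠ 3) (hij : i ≠ j) (hji : r j ≤ r i) :
      2 - δ < ‖u i - u j‖ := by
    refine lt_of_lt_of_le ?_ (two_sub_two_mul_le_norm_smul_inv_norm_sub
      (h.norm_sub i 3 hi) (h.norm_sub j 3 hj) (by rw [sub_sub_sub_cancel_right, h.norm_sub i j hij])
      hji (h.pos_and_le_mul hε hj).1 h.pos₃.le (h.pos_and_le_mul hε hj).2)
    linarith [min_le_left (δ / 4) (1 / 2)]
  refine (hfar (unit 0 (by decide)) (unit 1 (by decide)) (unit 2 (by decide))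
    (far 0 1 (by decide) (by decide) (by decide) h.le₁₀)
    (far 1 2 (by decide) (by decide) (by decide) h.le₂₁)).not_gt ?_
  rw [norm_sub_rev]
  exact far 0 2 (by decide) (by decide) (by decide) (h.le₂₁.trans h.le₁₀)

theorem exists_forall_not_isLacunaryStar_of_norming {F : Type*} [NormedAddCommGroup F]
    [NormedSpace ℝ F] [UniformConvexSpace F] (B : F →L[ℝ] StrongDual ℝ E) (hB : ‖B‖ ≤ 1)
    (hnorming : ∀ y : E, ‖y‖ = 1 → ∃ g : F, ‖g‖ = 1 ∧ B g y = 1) :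
    ∃ ε, 0 < ε ∧ ε < 1 ∧ ∀ (x : Fin 4 → E) (r : Fin 4 → ℝ), ¬ IsLacunaryStar ε x r := by
  obtain ⟨δ, hδ, hfar⟩ := exists_forall_sphere_norm_sub_le_two_sub F
  set ε := min (δ / 8) (1 / 2)
  have hε : 0 < ε := by positivity
  refine ⟨ε, hε, (min_le_right _ _).trans_lt (by norm_num), fun x r h => ?_⟩
  have norming (i j : Fin 4) (hi : i ≠ 3) (hj : j ≠ 3) (hij : i ≠ j) :
      ∃ g : F, ‖g‖ = 1 ∧ B g (x i - x j) = r i + r j := by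
    have hd : 0 < ‖x i - x j‖ := by
      rw [h.norm_sub i j hij]
      linarith [(h.pos_and_le_mul hε hi).1, (h.pos_and_le_mul hε hj).1]
    obtain ⟨g, hg, hgy⟩ :=
      hnorming (‖x i - x j‖⁻¹ • (x i - x j)) (norm_smul_inv_norm (norm_pos_iff.1 hd))
    rw [map_smul, smul_eq_mul, inv_mul_eq_one₀ hd.ne'] at hgy
    exact ⟨g, hg, by rw [← hgy, h.norm_sub i j hij]⟩
  have hB1 {g : F} (hg : ‖g‖ = 1) : ‖B g‖ ≤ 1 :=
    (B.le_of_opNorm_le hB g).trans_eq (by rw [hg, one_mul])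
  -- `g` and `-g'` both almost norm `x i - x 3`
  have far (i j k : Fin 4) (hi : i ≠ 3) (hj : j ≠ 3) (hk : k ≠ 3) {g g' : F}
      (hg : ‖g‖ = 1) (hg' : ‖g'‖ = 1) (hgi : B g (x i - x j) = r i + r j)
      (hg'i : B g' (x k - x i) = r k + r i) : 2 - δ < ‖g - g'‖ := by
    obtain ⟨hri, hr3⟩ := h.pos_and_le_mul hε hi
    have hgx := (sub_le_apply_sub_of_apply_sub_eq (hB1 hg) hgi
      (h.norm_sub i 3 hi) (h.norm_sub j 3 hj)).1
    have hg'x := (sub_le_apply_sub_of_apply_sub_eq (hB1 hg') hg'i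
      (h.norm_sub k 3 hk) (h.norm_sub i 3 hi)).2
    calc 2 - δ < 2 - 4 * ε := by linarith [min_le_left (δ / 8) (1 / 2)]
      _ ≤ ‖B g - B g'‖ :=
        two_sub_four_mul_le_norm_sub (h.norm_sub i 3 hi) hgx hg'x hri h.pos₃.le hr3
      _ ≤ ‖g - g'‖ := by
        rw [← map_sub]
        exact (B.le_of_opNorm_le hB _).trans_eq (one_mul _)
  obtain ⟨g₀, hg₀, hx₀⟩ := norming 0 1 (by decide) (by decide) (by decide)
  obtain ⟨g₁, hg₁, hx₁⟩ := norming 1 2 (by decide) (by decide) (by decide)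
  obtain ⟨g₂, hg₂, hx₂⟩ := norming 2 0 (by decide) (by decide) (by decide)
  exact (hfar hg₀ hg₂ hg₁ (far 0 1 2 (by decide) (by decide) (by decide) hg₀ hg₂ hx₀ hx₂)
    (far 2 0 1 (by decide) (by decide) (by decide) hg₂ hg₁ hx₂ hx₁)).not_gt
    (far 1 2 0 (by decide) (by decide) (by decide) hg₁ hg₀ hx₁ hx₀)

end Star

theorem lp.exists_forall_not_isLacunaryStar {ι : Type*} {p : ℝ} [Fact (1 ≤ ENNReal.ofReal p)]
    (hp : 1 < p) :
    ∃ ε, 0 < ε ∧ ε < 1 ∧ ∀ (x : Fin 4 → lp (fun _ : ι => ℝ) (ENNReal.ofReal p)) (r : Fin 4 → ℝ),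
      ¬ IsLacunaryStar ε x r := by
  rcases le_or_gt 2 p with hp2 | hp2
  · have := lp.uniformConvexSpace (ι := ι) (p := ENNReal.ofReal p)
      (by rwa [ENNReal.toReal_ofReal (by linarith)])
    exact exists_forall_not_isLacunaryStar_of_uniformConvexSpace
  · set q := p.conjExponent
    have hpq : p.HolderConjugate q := .conjExponent hp
    have hq2 : 2 ≤ q := by
      rw [hpq.conjugate_eq, le_div_iff₀ hpq.sub_one_pos]
      linarith
    have : Fact (1 ≤ ENNReal.ofReal q) := ⟨ENNReal.one_le_ofReal.2 (by linarith)⟩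
    have := hpq.symm.ennrealOfReal
    have := lp.uniformConvexSpace (ι := ι) (p := ENNReal.ofReal q)
      (by rwa [ENNReal.toReal_ofReal (by linarith)])
    refine exists_forall_not_isLacunaryStar_of_norming
      (lp.dualPairing (ENNReal.ofReal q) (ENNReal.ofReal p) (fun _ => ContinuousLinearMap.mul ℝ ℝ)
        (K := 1) fun _ => (ContinuousLinearMap.opNorm_mul_le ℝ ℝ).trans_eq NNReal.coe_one.symm)
      ((lp.norm_dualPairing _ _).trans_eq NNReal.coe_one) fun y hy => ?_
    obtain ⟨g, hg, hgy⟩ := lp.exists_norm_eq_one_tsum_mul_eq_one hpq y hy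
    exact ⟨g, hg, by rw [lp.dualPairing_apply]; simpa using hgy⟩

def starDist {α : Type*} [DecidableEq α] (w : α → ℝ) (i j : α) : ℝ :=
  if i = j then 0 else w i + w j

theorem isMetricDist_starDist {α : Type*} [DecidableEq α] {w : α → ℝ} (hw : ∀ i, 0 < w i) :
    IsMetricDist (starDist w) := by
  refine ⟨fun x y => ?_, fun x y => ?_, fun x y z => ?_⟩
  · unfold starDist
    split_ifs with h
    · simp [h]
    · simp only [h, iff_false]
      linarith [hw x, hw y]
  · unfold starDist
    rcases eq_or_ne x y with rfl | h
    · rfl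
    · rw [if_neg h, if_neg h.symm, add_comm]
  · rcases eq_or_ne x y with rfl | hxy
    · simp [starDist]
    rcases eq_or_ne y z with rfl | hyz
    · simp [starDist]
    simp only [starDist, if_neg hxy, if_neg hyz]
    split_ifs <;> linarith [hw x, hw y, hw z]

theorem isLacunaryStar_of_strictMono {E : Type*} [NormedAddCommGroup E] {n : ℕ} {ε : ℝ}
    (hε0 : 0 < ε) (hε1 : ε ≤ 1) {x : Fin n → E} {e : Fin 4 → Fin n} (he : StrictMono e)
    (hx : ∀ i j, ‖x (e i) - x (e j)‖ = starDist (fun k : Fin n => ε ^ ((k : ℕ) + 1)) (e i) (e j)) :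
    IsLacunaryStar ε (x ∘ e) (fun i => ε ^ ((e i : ℕ) + 1)) := by
  have anti {i j : Fin 4} (hij : i ≤ j) : ε ^ ((e j : ℕ) + 1) ≤ ε ^ ((e i : ℕ) + 1) :=
    pow_le_pow_of_le_one hε0.le hε1 (by have := he.monotone hij; omega)
  refine ⟨fun i j hij => ?_, anti (by decide), anti (by decide), by positivity, ?_⟩
  · simpa [starDist, he.injective.ne hij] using hx i j
  · rw [← pow_succ']
    exact pow_le_pow_of_le_one hε0.le hε1 (by have := he (show (2 : Fin 4) < 3 by decide); omega)

theorem stmt19_general (p : ℝ) (hp : 1 < p) (n : ℕ) :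
    ∃ d : Fin n → Fin n → ℝ, IsMetricDist d ∧
      ∀ S : Finset (Fin n), S.card = 4 →
        ¬ ∃ f : Fin n → lp (fun _ : ℕ => ℝ) (ENNReal.ofReal p),
            ∀ x ∈ S, ∀ y ∈ S, ‖f x - f y‖ = d x y := by
  have : Fact (1 ≤ ENNReal.ofReal p) := ⟨ENNReal.one_le_ofReal.2 hp.le⟩
  obtain ⟨ε, hε0, hε1, hε⟩ := lp.exists_forall_not_isLacunaryStar (ι := ℕ) hp
  refine ⟨starDist fun k : Fin n => ε ^ ((k : ℕ) + 1),
    isMetricDist_starDist fun _ => by positivity, ?_⟩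
  rintro S hS ⟨f, hf⟩
  exact hε _ _ <| isLacunaryStar_of_strictMono (x := f) hε0 hε1.le (S.orderEmbOfFin hS).strictMono
    fun i j => hf _ (S.orderEmbOfFin_mem hS i) _ (S.orderEmbOfFin_mem hS j)

/-- For every `1 < p < ∞` and every `n ≥ 4` there exists an `n`-point metric space
(a metric `d` on `Fin n`) such that no 4-point subspace of it embeds isometrically
into `ℓ_p`. -/
theorem stmt19 (p : ℝ) (hp : 1 < p) (n : ℕ) (hn : 4 ≤ n) :
    ∃ d : Fin n → Fin n → ℝ, IsMetricDist d ∧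
      ∀ S : Finset (Fin n), S.card = 4 →
        ¬ ∃ f : Fin n → lp (fun _ : ℕ => ℝ) (ENNReal.ofReal p),
            ∀ x ∈ S, ∀ y ∈ S, ‖f x - f y‖ = d x y :=
  stmt19_general p hp n
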